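/- In a derivation of Γ ⊢ u : β in the Lambek calculus S_IE where u is in β-normal η-long form with head h, if h is a lexical constant or a variable whose type is a strict positive subtype of some lexical type, and all variables of Γ and all variables abstracted by u have types that are strict positive subtypes of lexical types, then every variable occurring in u has a type that is a strict positive subtype of a lexical type. -/
import Mathlib


inductive Conn where
  | slash | bslash
deriving DecidableEq

inductive OType (Pr : Type) where
  | atom : Pr → OType Pr
  | over : OType Pr → OType Pr → OType Pr   -- `over β α` is β/α
  | under : OType Pr → OType Pr → OType Pr  -- `under α β` is α\β
deriving DecidableEq

def Conn.app {Pr : Type} : Conn → OType Pr → OType Pr → OType Pr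
  | .slash, α, β => .over β α
  | .bslash, α, β => .under α β

mutual
/-- `PosSub Pr σ α` means σ ⊂⁺ α. -/
inductive PosSub (Pr : Type) : OType Pr → OType Pr → Prop where
  | refl (α : OType Pr) : PosSub Pr α α
  | ofPos {c : Conn} {γ β α : OType Pr} : PosSub Pr (c.app γ β) α → PosSub Pr β α
  | ofNeg {c : Conn} {γ β α : OType Pr} : NegSub Pr (c.app γ β) α → PosSub Pr γ α

inductive NegSub (Pr : Type) : OType Pr → OType Pr → Prop where
  | ofPos {c : Conn} {γ β α : OType Pr} : PosSub Pr (c.app γ β) α → NegSub Pr γ α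
  | ofNeg {c : Conn} {γ β α : OType Pr} : NegSub Pr (c.app γ β) α → NegSub Pr β α
end

/-- λ-terms with typed variables. -/
inductive Tm (T Pr : Type) where
  | var : ℕ → OType Pr → Tm T Pr
  | const : T → Tm T Pr
  | lam : ℕ → OType Pr → Tm T Pr → Tm T Pr
  | app : Tm T Pr → Tm T Pr → Tm T Pr

inductive Entry (T Pr : Type) where
  | lex : T → Entry T Pr
  | var : ℕ → OType Pr → Entry T Pr

def fce {T Pr : Type} : Conn → List (Entry T Pr) → List (Entry T Pr) → List (Entry T Pr)
  | .slash, Γ, Δ => Γ ++ Δ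
  | .bslash, Γ, Δ => Δ ++ Γ

mutual
/-- Neutral (eliminated-spine) derivations of the β-normal η-long fragment of
S_IE. -/
inductive NE {T Pr : Type} (χ : T → Set (OType Pr)) :
    List (Entry T Pr) → Tm T Pr → OType Pr → Prop where
  | ax (x : ℕ) (α : OType Pr) : NE χ [.var x α] (.var x α) α
  | lex {t : T} {α : OType Pr} : α ∈ χ t → NE χ [.lex t] (.const t) α
  | elim {c : Conn} {Γ Δ : List (Entry T Pr)} {u v : Tm T Pr} {α β : OType Pr} :
      NE χ Γ u (c.app α β) → NF χ Δ v α → NE χ (fce c Γ Δ) (.app u v) β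

/-- β-normal η-long derivations in S_IE. -/
inductive NF {T Pr : Type} (χ : T → Set (OType Pr)) :
    List (Entry T Pr) → Tm T Pr → OType Pr → Prop where
  | ofNE {Γ : List (Entry T Pr)} {u : Tm T Pr} {r : Pr} :
      NE χ Γ u (.atom r) → NF χ Γ u (.atom r)
  | intro {c : Conn} {Γ : List (Entry T Pr)} {x : ℕ} {α β : OType Pr} {u : Tm T Pr} :
      Γ ≠ [] → NF χ (fce c Γ [.var x α]) u β → NF χ Γ (.lam x α u) (c.app α β)
end

/-- Tp(G)⁺,≠ : strict positive subtypes of lexical types. -/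
def TpPos {T Pr : Type} (χ : T → Set (OType Pr)) : Set (OType Pr) :=
  {α | ∃ (t : T) (β : OType Pr), β ∈ χ t ∧ PosSub Pr α β ∧ α ≠ β}

/-- The head of a term in head form λx₁...xₘ. h u₁ ... uₙ. -/
def headOf {T Pr : Type} : Tm T Pr → Tm T Pr
  | .lam _ _ u => headOf u
  | .app u _ => headOf u
  | u => u

/-- The types of the variables abstracted at the top of a term
(the x₁,...,xₘ of its head form). -/
def topAbsTypes {T Pr : Type} : Tm T Pr → List (OType Pr)
  | .lam _ α u => α :: topAbsTypes u
  | _ => []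

/-- Types of all variables occurring in a term (including binders). -/
def varTypes {T Pr : Type} : Tm T Pr → Set (OType Pr)
  | .var _ α => {α}
  | .const _ => ∅
  | .lam _ α u => {α} ∪ varTypes u
  | .app u v => varTypes u ∪ varTypes v

def osize {Pr : Type} : OType Pr → ℕ
  | .atom _ => 1
  | .over a b => osize a + osize b + 1
  | .under a b => osize a + osize b + 1

lemma capp_size {Pr : Type} (c : Conn) (a b : OType Pr) :
    osize a < osize (c.app a b) ∧ osize b < osize (c.app a b) := by
  cases c <;> simp [Conn.app, osize] <;> omega

lemma negsub_size {Pr : Type} {s a : OType Pr} (h : NegSub Pr s a) :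
    osize s < osize a := by
  refine NegSub.rec (Pr := Pr)
    (motive_1 := fun s a _ => osize s ≤ osize a)
    (motive_2 := fun s a _ => osize s < osize a)
    ?_ ?_ ?_ ?_ ?_ h
  · intro α; exact le_refl _
  · intro c γ β α _ ih; exact le_trans (le_of_lt (capp_size c γ β).2) ih
  · intro c γ β α _ ih; exact le_of_lt (lt_trans (capp_size c γ β).1 ih)
  · intro c γ β α _ ih; exact lt_of_lt_of_le (capp_size c γ β).1 ih
  · intro c γ β α _ ih; exact lt_trans (capp_size c γ β).2 ih

lemma arg_tppos {T Pr : Type} {χ : T → Set (OType Pr)} {t : T} {c : Conn}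
    {δ α β : OType Pr} (hδ : δ ∈ χ t) (h : NegSub Pr (c.app α β) δ) :
    α ∈ TpPos χ := by
  refine ⟨t, δ, hδ, PosSub.ofNeg h, fun e => ?_⟩
  subst e
  exact absurd (lt_trans (capp_size c α β).1 (negsub_size h)) (lt_irrefl _)

lemma ne_nf_main {T Pr : Type} (χ : T → Set (OType Pr)) (u : Tm T Pr) :
    (∀ Γ γ, NE χ Γ u γ → (∀ x α, Entry.var x α ∈ Γ → α ∈ TpPos χ) →
       (∀ σ ∈ varTypes u, σ ∈ TpPos χ) ∧ ∃ t δ, δ ∈ χ t ∧ PosSub Pr γ δ) ∧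
    (∀ Γ γ, NF χ Γ u γ → (∀ x α, Entry.var x α ∈ Γ → α ∈ TpPos χ) →
       (∃ t δ, δ ∈ χ t ∧ NegSub Pr γ δ) → ∀ σ ∈ varTypes u, σ ∈ TpPos χ) := by
  induction u with
  | var n α =>
    have hne : ∀ Γ γ, NE χ Γ (Tm.var n α) γ →
        (∀ x α, Entry.var x α ∈ Γ → α ∈ TpPos χ) →
        (∀ σ ∈ varTypes (Tm.var n α : Tm T Pr), σ ∈ TpPos χ) ∧ ∃ t δ, δ ∈ χ t ∧ PosSub Pr γ δ := by
      intro Γ γ h hΓ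
      cases h with
      | ax =>
        have hα : α ∈ TpPos χ := hΓ n α (by simp)
        refine ⟨fun σ hσ => ?_, ?_⟩
        · simp [varTypes] at hσ; subst hσ; exact hα
        · obtain ⟨t, δ, h1, h2, _⟩ := hα; exact ⟨t, δ, h1, h2⟩
    refine ⟨hne, fun Γ γ h hΓ _ => ?_⟩
    cases h with
    | ofNE h => exact (hne _ _ h hΓ).1
  | const t =>
    have hne : ∀ Γ γ, NE χ Γ (Tm.const t) γ →
        (∀ x α, Entry.var x α ∈ Γ → α ∈ TpPos χ) →
        (∀ σ ∈ varTypes (Tm.const t : Tm T Pr), σ ∈ TpPos χ) ∧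
          ∃ t δ, δ ∈ χ t ∧ PosSub Pr γ δ := by
      intro Γ γ h hΓ
      cases h with
      | lex hγ =>
        exact ⟨fun σ hσ => by simp [varTypes] at hσ, ⟨t, γ, hγ, PosSub.refl γ⟩⟩
    refine ⟨hne, fun Γ γ h hΓ _ => ?_⟩
    cases h with
    | ofNE h => exact (hne _ _ h hΓ).1
  | lam x α u ih =>
    refine ⟨fun Γ γ h hΓ => ?_, fun Γ γ h hΓ hneg => ?_⟩
    · cases h
    cases h with
    | ofNE h => cases h
    | @intro c _ _ _ β _ hΓne hu =>
      obtain ⟨t, δ, hδ, hns⟩ := hneg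
      have hα : α ∈ TpPos χ := arg_tppos hδ hns
      have hβ : ∃ t δ, δ ∈ χ t ∧ NegSub Pr β δ := ⟨t, δ, hδ, NegSub.ofNeg hns⟩
      have hΓ' : ∀ y σ, Entry.var y σ ∈ fce c Γ [Entry.var x α] → σ ∈ TpPos χ := by
        intro y σ hm
        cases c <;> simp [fce] at hm <;>
          rcases hm with hm | hm
        · exact hΓ y σ hm
        · obtain ⟨e1, e2⟩ := hm; subst e2; exact hα
        · obtain ⟨e1, e2⟩ := hm; subst e2; exact hα
        · exact hΓ y σ hm
      intro σ hσ
      simp [varTypes] at hσ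
      rcases hσ with hσ | hσ
      · subst hσ; exact hα
      · exact ih.2 _ _ hu hΓ' hβ σ hσ
  | app u v ihu ihv =>
    have hne : ∀ Γ γ, NE χ Γ (Tm.app u v) γ →
        (∀ x α, Entry.var x α ∈ Γ → α ∈ TpPos χ) →
        (∀ σ ∈ varTypes (Tm.app u v), σ ∈ TpPos χ) ∧ ∃ t δ, δ ∈ χ t ∧ PosSub Pr γ δ := by
      intro Γ γ h hΓ
      cases h with
      | @elim c Γ' Δ _ _ α _ hu hv =>
        have hΓ' : ∀ x σ, Entry.var x σ ∈ Γ' → σ ∈ TpPos χ := by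
          intro x σ hm; apply hΓ x σ; cases c <;> simp [fce] <;> tauto
        have hΔ : ∀ x σ, Entry.var x σ ∈ Δ → σ ∈ TpPos χ := by
          intro x σ hm; apply hΓ x σ; cases c <;> simp [fce] <;> tauto
        obtain ⟨hvars, t, δ, hδ, hps⟩ := ihu.1 _ _ hu hΓ'
        have hαneg : ∃ t δ, δ ∈ χ t ∧ NegSub Pr α δ := ⟨t, δ, hδ, NegSub.ofPos hps⟩
        have hv' := ihv.2 _ _ hv hΔ hαneg
        refine ⟨fun σ hσ => ?_, t, δ, hδ, PosSub.ofPos hps⟩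
        simp [varTypes] at hσ
        rcases hσ with hσ | hσ
        · exact hvars σ hσ
        · exact hv' σ hσ
    refine ⟨hne, fun Γ γ h hΓ _ => ?_⟩
    cases h with
    | ofNE h => exact (hne _ _ h hΓ).1

lemma nf_all {T Pr : Type} (χ : T → Set (OType Pr)) :
    ∀ (u : Tm T Pr) (Γ : List (Entry T Pr)) (β : OType Pr), NF χ Γ u β →
      (∀ x α, Entry.var x α ∈ Γ → α ∈ TpPos χ) →
      (∀ α ∈ topAbsTypes u, α ∈ TpPos χ) →
      ∀ α ∈ varTypes u, α ∈ TpPos χ := by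
  intro u
  induction u with
  | lam x α u ih =>
    intro Γ β h hΓ habs
    cases h with
    | ofNE h => cases h
    | @intro c _ _ _ β' _ hΓne hu =>
      have hα : α ∈ TpPos χ := habs α (by simp [topAbsTypes])
      have hΓ' : ∀ y σ, Entry.var y σ ∈ fce c Γ [Entry.var x α] → σ ∈ TpPos χ := by
        intro y σ hm
        cases c <;> simp [fce] at hm <;>
          rcases hm with hm | hm
        · exact hΓ y σ hm
        · obtain ⟨e1, e2⟩ := hm; subst e2; exact hα
        · obtain ⟨e1, e2⟩ := hm; subst e2; exact hα
        · exact hΓ y σ hm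
      have habs' : ∀ σ ∈ topAbsTypes u, σ ∈ TpPos χ := by
        intro σ hσ; exact habs σ (by simp [topAbsTypes, hσ])
      intro σ hσ
      simp [varTypes] at hσ
      rcases hσ with hσ | hσ
      · subst hσ; exact hα
      · exact ih _ _ hu hΓ' habs' σ hσ
  | var n a =>
    intro Γ β h hΓ habs
    cases h with
    | ofNE h => exact ((ne_nf_main χ _).1 _ _ h hΓ).1
  | const t =>
    intro Γ β h hΓ habs
    cases h with
    | ofNE h => exact ((ne_nf_main χ _).1 _ _ h hΓ).1
  | app u v ihu ihv =>
    intro Γ β h hΓ habs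
    cases h with
    | ofNE h => exact ((ne_nf_main χ _).1 _ _ h hΓ).1

/-- In a β-normal η-long derivation of Γ ⊢ u : β in S_IE, if the head of u is
a lexical constant or a variable of strictly positive type, and all variables
of Γ and all variables abstracted by u have strictly positive types, then
every variable occurring in u has a strictly positive type. -/
theorem vars_strictly_positive {T Pr : Type} (χ : T → Set (OType Pr))
    {Γ : List (Entry T Pr)} {u : Tm T Pr} {β : OType Pr}
    (h : NF χ Γ u β)
    (hhead : (∃ t, headOf u = Tm.const t) ∨
      (∃ x α, headOf u = Tm.var x α ∧ α ∈ TpPos χ))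
    (hΓ : ∀ x α, Entry.var x α ∈ Γ → α ∈ TpPos χ)
    (habs : ∀ α ∈ topAbsTypes u, α ∈ TpPos χ) :
    ∀ α ∈ varTypes u, α ∈ TpPos χ := by
  exact nf_all χ u Γ β h hΓ habs
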